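/- arXiv:2303.04886 — 5 statements merged into one kernel-verified Lean document; each statement's English description precedes it below -/
import Mathlib

section
/- The set of all ratios o(G)/o(H), where G ranges over all finite groups and H ranges over all subgroups of G, is dense in the interval [0, ∞). That is, for every real number a ≥ 0 and every ε > 0, there exist a finite group G and a subgroup H of G such that |o(G)/o(H) - a| < ε. -/
/-!
A cyclic group of order `n` has average order `cyclicOrderSum n / n`, where
`cyclicOrderSum n = ∑_{d ∣ n} d φ(d)`, and the average order is multiplicative on direct products of groups of coprime orders. For the cyclic
group of order `2^(k+e)` and its subgroup of order `2^k` the ratio `o(G)/o(H)` tends to `2^e` as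
`k → ∞`. For `m` odd and a prime `p ≡ 1 [MOD m]`, let `U ≤ (ZMod p)ˣ` have order `m`; in the affine
group `ZMod p ⋊ U` every element outside the translations is conjugate into `U`, so relative to
the translation subgroup the ratio tends to `1/m` as `p → ∞`. Direct products of these two
families give ratios arbitrarily close to every `2^e/m` with `m` odd, and these are dense in
`[0, ∞)`.
-/

open Filter Topology

/-- The average order of the elements of a finite group `G`:
`o(G) = (1/|G|) * ∑_{x ∈ G} |x|`. -/
noncomputable def avgOrder (G : Type*) [Group G] : ℝ :=
  (∑ᶠ x : G, (orderOf x : ℝ)) / (Nat.card G)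

section AvgOrder

variable {G H : Type*} [Group G] [Group H]

theorem avgOrder_eq_sum_div [Fintype G] :
    avgOrder G = (∑ x : G, (orderOf x : ℝ)) / Fintype.card G := by
  rw [avgOrder, finsum_eq_sum_of_fintype, Nat.card_eq_fintype_card]

theorem avgOrder_congr (e : G ≃* H) : avgOrder G = avgOrder H := by
  rw [avgOrder, avgOrder, Nat.card_congr e.toEquiv, ← finsum_comp_equiv e.toEquiv]
  simp [MulEquiv.orderOf_eq]

theorem avgOrder_prod [Finite G] [Finite H] (h : (Nat.card G).Coprime (Nat.card H)) :
    avgOrder (G × H) = avgOrder G * avgOrder H := by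
  have := Fintype.ofFinite G
  have := Fintype.ofFinite H
  have orderOf_pair (x : G × H) : orderOf x = orderOf x.1 * orderOf x.2 := by
    rw [Prod.orderOf, Nat.Coprime.lcm_eq_mul]
    exact (h.coprime_dvd_left (orderOf_dvd_natCard _)).coprime_dvd_right (orderOf_dvd_natCard _)
  simp only [avgOrder_eq_sum_div, orderOf_pair, Nat.cast_mul, Fintype.sum_prod_type,
    ← Finset.sum_mul_sum, Fintype.card_prod, mul_div_mul_comm]

theorem avgOrder_prod_div_avgOrder_prod [Finite G] [Finite H]
    (h : (Nat.card G).Coprime (Nat.card H)) (G₀ : Subgroup G) (H₀ : Subgroup H) :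
    avgOrder (G × H) / avgOrder (G₀.prod H₀) =
      avgOrder G / avgOrder G₀ * (avgOrder H / avgOrder H₀) := by
  have h₀ : (Nat.card G₀).Coprime (Nat.card H₀) :=
    (h.coprime_dvd_left G₀.card_subgroup_dvd_card).coprime_dvd_right H₀.card_subgroup_dvd_card
  rw [avgOrder_congr (G₀.prodEquiv H₀), avgOrder_prod h, avgOrder_prod h₀, mul_div_mul_comm]

end AvgOrder

def cyclicOrderSum (n : ℕ) : ℕ := ∑ d ∈ n.divisors, d * d.totient

theorem IsCyclic.sum_orderOf {G : Type*} [Group G] [Fintype G] [IsCyclic G] :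
    ∑ x : G, orderOf x = cyclicOrderSum (Fintype.card G) := by
  classical
  rw [← Finset.sum_fiberwise_of_maps_to (g := orderOf) fun x _ =>
    Nat.mem_divisors.mpr ⟨orderOf_dvd_card, Fintype.card_ne_zero⟩]
  refine Finset.sum_congr rfl fun d hd => ?_
  rw [Finset.sum_congr rfl fun x hx => (Finset.mem_filter.mp hx).2, Finset.sum_const,
    smul_eq_mul, IsCyclic.card_orderOf_eq_totient (Nat.mem_divisors.mp hd).1, mul_comm]

theorem avgOrder_of_isCyclic (G : Type*) [Group G] [Finite G] [IsCyclic G] :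
    avgOrder G = cyclicOrderSum (Nat.card G) / Nat.card G := by
  have := Fintype.ofFinite G
  rw [avgOrder_eq_sum_div, Nat.card_eq_fintype_card, ← IsCyclic.sum_orderOf, Nat.cast_sum]

theorem cyclicOrderSum_prime_pow {p : ℕ} (hp : p.Prime) (m : ℕ) :
    ((p : ℝ) + 1) * cyclicOrderSum (p ^ m) = (p : ℝ) ^ (2 * m + 1) + 1 := by
  induction m with
  | zero => simp [cyclicOrderSum]
  | succ m ih =>
    have hstep : cyclicOrderSum (p ^ (m + 1)) =
        cyclicOrderSum (p ^ m) + p ^ (m + 1) * (p ^ (m + 1)).totient := by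
      simp only [cyclicOrderSum, Nat.sum_divisors_prime_pow hp, Finset.sum_range_succ]
    rw [hstep, Nat.totient_prime_pow_succ hp]
    push_cast [Nat.cast_sub hp.one_le]
    linear_combination ih

theorem cyclicOrderSum_prime {p : ℕ} (hp : p.Prime) :
    (cyclicOrderSum p : ℝ) = (p : ℝ) ^ 2 - p + 1 := by
  have h := cyclicOrderSum_prime_pow hp 1
  rw [pow_one] at h
  have : (p : ℝ) + 1 ≠ 0 := by positivity
  apply mul_left_cancel₀ this
  linear_combination h

theorem IsCyclic.exists_subgroup_natCard_eq {G : Type*} [Group G] [Finite G] [IsCyclic G]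
    {d : ℕ} (hd : d ∣ Nat.card G) : ∃ H : Subgroup G, Nat.card H = d := by
  obtain ⟨g, hg⟩ := IsCyclic.exists_ofOrder_eq_natCard (α := G)
  exact ⟨Subgroup.zpowers (g ^ (Nat.card G / d)), by
    rw [Nat.card_zpowers, ← hg, orderOf_pow_orderOf_div (hg ▸ Nat.card_pos.ne') (hg ▸ hd)]⟩

def avgOrderRatios (P : ℕ → Prop) : Set ℝ :=
  {r | ∃ (G : Type) (_ : Group G) (_ : Finite G) (H : Subgroup G),
    P (Nat.card G) ∧ avgOrder G / avgOrder H = r}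

theorem mul_mem_closure_avgOrderRatios {P Q : ℕ → Prop}
    (hPQ : ∀ m n, P m → Q n → m.Coprime n) {x y : ℝ}
    (hx : x ∈ closure (avgOrderRatios P)) (hy : y ∈ closure (avgOrderRatios Q)) :
    x * y ∈ closure (avgOrderRatios fun _ => True) := by
  refine map_mem_closure₂ continuous_mul hx hy ?_
  rintro _ ⟨G, _, _, G₀, hG, rfl⟩ _ ⟨H, _, _, H₀, hH, rfl⟩
  exact ⟨G × H, inferInstance, inferInstance, G₀.prod H₀, trivial,
    avgOrder_prod_div_avgOrder_prod (hPQ _ _ hG hH) G₀ H₀⟩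

theorem avgOrder_div_avgOrder_of_card_eq_prime_pow {p : ℕ} (hp : p.Prime)
    {G : Type*} [Group G] [Finite G] [IsCyclic G] (H : Subgroup G) {k e : ℕ}
    (hG : Nat.card G = p ^ (k + e)) (hH : Nat.card H = p ^ k) :
    avgOrder G / avgOrder H =
      ((p : ℝ) ^ (2 * e) + ((p : ℝ) ^ (2 * k + 1))⁻¹) /
        ((p : ℝ) ^ e * (1 + ((p : ℝ) ^ (2 * k + 1))⁻¹)) := by
  have hp0 : (p : ℝ) ≠ 0 := by exact_mod_cast hp.ne_zero
  have hW (m : ℕ) : (cyclicOrderSum (p ^ m) : ℝ) = ((p : ℝ) ^ (2 * m + 1) + 1) / (p + 1) := by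
    rw [← cyclicOrderSum_prime_pow hp, mul_div_cancel_left₀ _ (by positivity)]
  rw [avgOrder_of_isCyclic G, avgOrder_of_isCyclic H, hG, hH, hW, hW]
  push_cast
  field_simp
  ring

theorem pow_mem_closure_avgOrderRatios {p : ℕ} (hp : p.Prime) (e : ℕ) :
    (p : ℝ) ^ e ∈ closure (avgOrderRatios fun n => ∃ k, n = p ^ k) := by
  have : NeZero p := ⟨hp.ne_zero⟩
  have hp0 : (p : ℝ) ≠ 0 := by exact_mod_cast hp.ne_zero
  have hlim : Tendsto (fun y : ℝ => ((p : ℝ) ^ (2 * e) + y) / ((p : ℝ) ^ e * (1 + y)))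
      (𝓝 0) (𝓝 ((p : ℝ) ^ e)) := by
    have hcont : ContinuousAt
        (fun y : ℝ => ((p : ℝ) ^ (2 * e) + y) / ((p : ℝ) ^ e * (1 + y))) 0 := by
      fun_prop (disch := simp [hp0])
    convert hcont.tendsto using 2
    rw [add_zero, add_zero, mul_one, two_mul, pow_add,
      mul_div_cancel_right₀ _ (pow_ne_zero e hp0)]
  have hsmall : Tendsto (fun k : ℕ => ((p : ℝ) ^ (2 * k + 1))⁻¹) atTop (𝓝 0) :=
    tendsto_inv_atTop_zero.comp <|
      (tendsto_pow_atTop_atTop_of_one_lt (by exact_mod_cast hp.one_lt)).comp <|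
        tendsto_atTop_mono (fun k => (Nat.le_mul_of_pos_left k two_pos).trans (Nat.le_succ _))
          tendsto_id
  refine mem_closure_of_tendsto (hlim.comp hsmall) (Eventually.of_forall fun k => ?_)
  obtain ⟨H, hH⟩ := IsCyclic.exists_subgroup_natCard_eq
    (G := Multiplicative (ZMod (p ^ (k + e)))) (d := p ^ k) (by simp [pow_dvd_pow])
  exact ⟨_, inferInstance, inferInstance, H, ⟨k + e, by simp⟩,
    avgOrder_div_avgOrder_of_card_eq_prime_pow hp H (by simp) hH⟩

instance {N G : Type*} [Group N] [Group G] [Fintype N] [Fintype G] {φ : G →* MulAut N} :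
    Fintype (N ⋊[φ] G) :=
  Fintype.ofEquiv _ SemidirectProduct.equivProd.symm

section AffineGroup

variable (K : Type*) [Field K] (U : Subgroup Kˣ)

def affineAction : U →* MulAut (Multiplicative K) where
  toFun u := AddEquiv.toMultiplicative (DistribMulAction.toAddEquiv K (u : Kˣ))
  map_one' := by ext; simp
  map_mul' u v := by ext; simp [mul_smul]

abbrev AffineGroup : Type _ := Multiplicative K ⋊[affineAction K U] U

variable {K U}

theorem affineAction_apply (u : U) (x : K) :
    affineAction K U u (Multiplicative.ofAdd x) = Multiplicative.ofAdd (((u : Kˣ) : K) * x) := rfl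

theorem AffineGroup.orderOf_mk_of_ne_one (b : Multiplicative K) {u : U} (hu : u ≠ 1) :
    orderOf (⟨b, u⟩ : AffineGroup K U) = orderOf u := by
  have hu' : (1 : K) - (u : Kˣ) ≠ 0 :=
    sub_ne_zero.mpr fun h => hu (Subtype.ext (Units.ext h.symm))
  -- `⟨b, u⟩` is conjugate to `inr u` by the translation by the fixed point `b / (1 - u)`.
  have hconj : SemiconjBy
      (SemidirectProduct.inl (Multiplicative.ofAdd (b.toAdd / (1 - (u : Kˣ)))))
      (SemidirectProduct.inr u) (⟨b, u⟩ : AffineGroup K U) := by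
    refine SemidirectProduct.ext ?_ (by simp)
    simp only [SemidirectProduct.mul_left, SemidirectProduct.left_inl,
      SemidirectProduct.right_inl, SemidirectProduct.left_inr, map_one, mul_one,
      affineAction_apply]
    rw [← ofAdd_toAdd b, ← ofAdd_add, toAdd_ofAdd]
    congr 1
    field_simp
    ring
  rw [← SemiconjBy.orderOf_eq _ hconj, orderOf_injective _ SemidirectProduct.inr_injective]

theorem AffineGroup.sum_orderOf [Fintype K] [Fintype U] :
    ∑ g : AffineGroup K U, (orderOf g : ℝ) =
      ∑ b : Multiplicative K, (orderOf b : ℝ) +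
        Fintype.card K * (∑ u : U, (orderOf u : ℝ) - 1) := by
  classical
  have hsplit (f : U → ℝ) : ∑ u, f u = f 1 + ∑ u ∈ {1}ᶜ, f u :=
    Fintype.sum_eq_add_sum_compl 1 f
  rw [← SemidirectProduct.equivProd.symm.sum_comp, Fintype.sum_prod_type_right, hsplit,
    hsplit fun u => (orderOf u : ℝ), orderOf_one, Nat.cast_one, add_sub_cancel_left,
    Finset.mul_sum]
  congr 1
  · exact Finset.sum_congr rfl fun b _ => congrArg Nat.cast
      (orderOf_injective (SemidirectProduct.inl (φ := affineAction K U))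
        SemidirectProduct.inl_injective b)
  · refine Finset.sum_congr rfl fun u hu => ?_
    have hu : u ≠ 1 := by simpa using hu
    change ∑ b, (orderOf (⟨b, u⟩ : AffineGroup K U) : ℝ) = _
    simp only [AffineGroup.orderOf_mk_of_ne_one _ hu, Finset.sum_const, Finset.card_univ,
      nsmul_eq_mul, Fintype.card_multiplicative]

end AffineGroup

theorem AffineGroup.avgOrder_div_avgOrder_range_inl {p : ℕ} [Fact p.Prime]
    (U : Subgroup (ZMod p)ˣ) :
    avgOrder (AffineGroup (ZMod p) U) / avgOrder
        (SemidirectProduct.inl : Multiplicative (ZMod p) →* AffineGroup (ZMod p) U).range =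
      (1 - (p : ℝ)⁻¹ + (p : ℝ)⁻¹ ^ 2 + (cyclicOrderSum (Nat.card U) - 1) * (p : ℝ)⁻¹) /
        (Nat.card U * (1 - (p : ℝ)⁻¹ + (p : ℝ)⁻¹ ^ 2)) := by
  have hp := Fact.out (p := p.Prime)
  have := Fintype.ofFinite U
  have hsumK : ∑ b : Multiplicative (ZMod p), (orderOf b : ℝ) = (p : ℝ) ^ 2 - p + 1 := by
    rw [← Nat.cast_sum, IsCyclic.sum_orderOf, Fintype.card_multiplicative, ZMod.card,
      cyclicOrderSum_prime hp]
  have hsumU : ∑ u : U, (orderOf u : ℝ) = cyclicOrderSum (Nat.card U) := by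
    rw [← Nat.cast_sum, IsCyclic.sum_orderOf, Nat.card_eq_fintype_card]
  have hR : avgOrder (SemidirectProduct.inl :
      Multiplicative (ZMod p) →* AffineGroup (ZMod p) U).range = ((p : ℝ) ^ 2 - p + 1) / p := by
    rw [← avgOrder_congr (MonoidHom.ofInjective SemidirectProduct.inl_injective),
      avgOrder_eq_sum_div, hsumK, Fintype.card_multiplicative, ZMod.card]
  have hcard : Fintype.card (AffineGroup (ZMod p) U) = p * Nat.card U := by
    rw [Fintype.card_congr SemidirectProduct.equivProd, Fintype.card_prod,
      Fintype.card_multiplicative, ZMod.card, Nat.card_eq_fintype_card]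
  have hp0 : (p : ℝ) ≠ 0 := by exact_mod_cast hp.ne_zero
  have hWp : 1 - (p : ℝ) + p ^ 2 ≠ 0 := by nlinarith [sq_nonneg ((p : ℝ) - 1)]
  have hm : (Nat.card U : ℝ) ≠ 0 := by exact_mod_cast Nat.card_pos.ne'
  rw [avgOrder_eq_sum_div, AffineGroup.sum_orderOf, hsumK, hsumU, hR, hcard, ZMod.card]
  push_cast
  field_simp

theorem inv_mem_closure_avgOrderRatios {m N : ℕ} (hm : m ≠ 0) (hN : N ≠ 0)
    (hmN : m.Coprime N) :
    (m : ℝ)⁻¹ ∈ closure (avgOrderRatios (·.Coprime N)) := by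
  choose p hp hNp hpm using fun k => Nat.exists_prime_gt_modEq_one (max k N) hm
  set c : ℝ := cyclicOrderSum m - 1
  have hlim : Tendsto (fun t : ℝ => (1 - t + t ^ 2 + c * t) / (m * (1 - t + t ^ 2)))
      (𝓝 0) (𝓝 (m : ℝ)⁻¹) := by
    have hcont : ContinuousAt
        (fun t : ℝ => (1 - t + t ^ 2 + c * t) / (m * (1 - t + t ^ 2))) 0 := by
      fun_prop (disch := simpa using hm)
    simpa using hcont.tendsto
  have hsmall : Tendsto (fun k => ((p k : ℕ) : ℝ)⁻¹) atTop (𝓝 0) :=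
    tendsto_inv_atTop_zero.comp <| tendsto_natCast_atTop_atTop.comp <|
      tendsto_atTop_mono (fun k => (le_max_left k N).trans (hNp k).le) tendsto_id
  refine mem_closure_of_tendsto (hlim.comp hsmall) (Eventually.of_forall fun k => ?_)
  have : Fact (p k).Prime := ⟨hp k⟩
  have hdvd : m ∣ Nat.card (ZMod (p k))ˣ := by
    rw [Nat.card_eq_fintype_card, ZMod.card_units]
    exact (Nat.modEq_iff_dvd' (hp k).one_le).mp (hpm k).symm
  obtain ⟨U, hU⟩ := IsCyclic.exists_subgroup_natCard_eq hdvd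
  have hpN : (p k).Coprime N := (Nat.Prime.coprime_iff_not_dvd (hp k)).mpr fun h =>
    (Nat.le_of_dvd (Nat.pos_of_ne_zero hN) h).not_gt ((le_max_right k N).trans_lt (hNp k))
  have := Fintype.ofFinite U
  refine ⟨AffineGroup (ZMod (p k)) U, inferInstance, inferInstance, _, ?_,
    by rw [AffineGroup.avgOrder_div_avgOrder_range_inl, hU]; rfl⟩
  rw [Nat.card_congr SemidirectProduct.equivProd, Nat.card_prod, hU]
  simpa using hpN.mul_left hmN

theorem mem_closure_two_pow_div_odd {a : ℝ} (ha : 0 < a) :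
    a ∈ closure {x : ℝ | ∃ e m : ℕ, Odd m ∧ x = 2 ^ e / m} := by
  -- `m e` is the odd integer nearest to `2 ^ e / a`, so `m e / 2 ^ e` tends to `a⁻¹`.
  set m : ℕ → ℕ := fun e => 2 * ⌊(2 : ℝ) ^ e / (2 * a)⌋₊ + 1
  have hm (e : ℕ) : |(m e : ℝ) / 2 ^ e - a⁻¹| ≤ (1 / 2) ^ e := by
    have hfloor := Nat.floor_le (a := (2 : ℝ) ^ e / (2 * a)) (by positivity)
    have hfloor' := Nat.lt_floor_add_one ((2 : ℝ) ^ e / (2 * a))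
    have hhalf : (2 : ℝ) ^ e / a = 2 * ((2 : ℝ) ^ e / (2 * a)) := by field_simp
    have hnear : |(m e : ℝ) - 2 ^ e / a| ≤ 1 := by
      simp only [m]
      push_cast
      rw [abs_le]
      constructor <;> linarith
    rw [show (m e : ℝ) / 2 ^ e - a⁻¹ = ((m e : ℝ) - 2 ^ e / a) / 2 ^ e by field_simp, abs_div,
      abs_of_pos (a := (2 : ℝ) ^ e) (by positivity), div_pow, one_pow]
    exact div_le_div_of_nonneg_right hnear (by positivity)
  have hlim : Tendsto (fun e => (m e : ℝ) / 2 ^ e) atTop (𝓝 a⁻¹) :=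
    tendsto_iff_norm_sub_tendsto_zero.mpr <| squeeze_zero (fun _ => norm_nonneg _) hm <|
      tendsto_pow_atTop_nhds_zero_of_lt_one (by norm_num) (by norm_num)
  refine mem_closure_of_tendsto (by simpa using hlim.inv₀ (inv_ne_zero ha.ne'))
    (Eventually.of_forall fun e => ⟨e, m e, odd_two_mul_add_one _, by simp⟩)

theorem Ici_subset_closure_avgOrderRatios :
    Set.Ici 0 ⊆ closure (avgOrderRatios fun _ => True) := by
  have hdyadic : {x : ℝ | ∃ e m : ℕ, Odd m ∧ x = 2 ^ e / m} ⊆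
      closure (avgOrderRatios fun _ => True) := by
    rintro _ ⟨e, m, hm, rfl⟩
    rw [div_eq_mul_inv]
    refine mul_mem_closure_avgOrderRatios ?_
      (by exact_mod_cast pow_mem_closure_avgOrderRatios Nat.prime_two e)
      (inv_mem_closure_avgOrderRatios hm.pos.ne' two_ne_zero (Nat.coprime_two_right.mpr hm))
    rintro _ n ⟨k, rfl⟩ hn
    exact hn.symm.pow_left k
  rw [← closure_Ioi]
  exact closure_minimal (fun a ha => closure_minimal hdyadic isClosed_closure
    (mem_closure_two_pow_div_odd ha)) isClosed_closure

/-- The set of ratios `o(G)/o(H)`, with `G` a finite group and `H ≤ G`,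
is dense in `[0, ∞)`. -/
theorem avgOrder_ratio_dense :
    ∀ a : ℝ, 0 ≤ a → ∀ ε : ℝ, 0 < ε →
      ∃ (G : Type) (_ : Group G), Finite G ∧
        ∃ H : Subgroup G, |avgOrder G / avgOrder H - a| < ε := by
  intro a ha ε hε
  obtain ⟨r, ⟨G, _, _, H, -, rfl⟩, hr⟩ :=
    Metric.mem_closure_iff.mp (Ici_subset_closure_avgOrderRatios ha) ε hε
  exact ⟨G, inferInstance, inferInstance, H, by rwa [← Real.dist_eq, dist_comm]⟩
end

section
/- For every finite abelian group G and every subgroup H of G, one has o(G) ≥ o(H); equivalently, o(G)/o(H) ≥ 1. -/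
open Filter Topology

section Aux

attribute [local instance] Classical.propDecidable

open Finset

variable {A B : Type*} [Group A] [Group B] [Fintype A] [Fintype B]

/-- Decompose a sum over a group along a surjective hom with a section. -/
lemma sum_decomp_aux (φ : A →* B) (sec : B → A) (hsec : ∀ b, φ (sec b) = b) (g : A → ℕ) :
    ∑ x : A, g x = ∑ b : B, ∑ k : φ.ker, g (sec b * k) := by
  classical
  rw [← Fintype.sum_fiberwise φ g]
  refine Fintype.sum_congr _ _ fun b => ?_
  refine (Fintype.sum_equiv
    (⟨fun k => ⟨sec b * k, by simp [map_mul, hsec, MonoidHom.mem_ker.mp k.2]⟩,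
      fun x => ⟨(sec b)⁻¹ * x, by simp [MonoidHom.mem_ker, map_mul, hsec, x.2]⟩,
      fun k => by ext; simp, fun x => by ext; simp⟩ : φ.ker ≃ {x // φ x = b})
    (fun k => g (sec b * k)) (fun x => g x) (fun k => rfl)).symm

lemma sum_comp_eq_aux (φ : A →* B) (hφ : Function.Surjective φ) (g : B → ℕ) :
    ∑ x : A, g (φ x) = Nat.card φ.ker * ∑ b : B, g b := by
  classical
  choose sec hsec using hφ
  rw [sum_decomp_aux φ sec hsec (fun x => g (φ x))]
  have h1 : ∀ b : B, ∑ k : φ.ker, g (φ (sec b * (k : A))) = Nat.card φ.ker * g b := by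
    intro b
    calc ∑ k : φ.ker, g (φ (sec b * (k : A))) = ∑ _k : φ.ker, g b :=
          Finset.sum_congr rfl fun k _ => by
            rw [map_mul, hsec, MonoidHom.mem_ker.mp k.2, mul_one]
      _ = Nat.card φ.ker * g b := by
          rw [Finset.sum_const, Finset.card_univ, smul_eq_mul, Nat.card_eq_fintype_card]
  simp only [h1]
  rw [← Finset.mul_sum]

end Aux

section Key

attribute [local instance] Classical.propDecidable

open Finset

variable {G : Type*} [CommGroup G] [Fintype G]

lemma sum_orderOf_mul_mem (A : Subgroup G) {a : G} (ha : a ∈ A) :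
    ∑ h : A, orderOf (a * (h : G)) = ∑ h : A, orderOf (h : G) := by
  refine Fintype.sum_equiv (Equiv.mulLeft (⟨a, ha⟩ : A))
    (fun h => orderOf (a * (h : G))) (fun h => orderOf (h : G)) fun h => ?_
  simp

lemma key_coset_le : ∀ (n : ℕ) (A : Subgroup G), Nat.card A = n → ∀ a : G,
    ∑ h : A, orderOf (h : G) ≤ ∑ h : A, orderOf (a * (h : G)) := by
  intro n
  induction n using Nat.strong_induction_on with
  | _ n ih =>
    intro A hA a
    by_cases ha : a ∈ A
    · exact le_of_eq (sum_orderOf_mul_mem A ha).symm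
    · set d := orderOf ((a : G ⧸ A)) with hd
      have hd0 : 0 < d := orderOf_pos _
      have had : a ^ d ∈ A := by
        rw [← QuotientGroup.eq_one_iff]
        rw [QuotientGroup.mk_pow]
        exact pow_orderOf_eq_one _
      set B := A.map (powMonoidHom d) with hBdef
      have hBA : B ≤ A := by
        rintro _ ⟨h, hh, rfl⟩
        exact A.pow_mem hh d
      set φ : A →* B := (powMonoidHom d).subgroupMap A with hφdef
      have hφ : Function.Surjective φ := (powMonoidHom d).subgroupMap_surjective A
      have hφcoe : ∀ h : A, ((φ h : B) : G) = (h : G) ^ d := fun h => rfl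
      -- claim 2
      have claim2 : ∑ u : B, orderOf (u : G) ≤ ∑ u : B, orderOf (a ^ d * (u : G)) := by
        by_cases hB : B = A
        · exact le_of_eq (sum_orderOf_mul_mem B (hB ▸ had)).symm
        · have hlt : Nat.card B < n := by
            rw [← hA]
            have hss : (B : Set G) ⊂ (A : Set G) := by
              exact HasSubset.Subset.ssubset_of_ne hBA (by
                simpa [SetLike.coe_set_eq] using hB)
            have h2 := Set.ncard_lt_ncard hss (Set.toFinite _)
            rwa [← Nat.card_coe_set_eq, ← Nat.card_coe_set_eq] at h2
          exact ih _ hlt B rfl (a ^ d)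
      -- pointwise facts
      have step1 : ∀ h : A, orderOf (h : G) ≤ d * orderOf ((h : G) ^ d) := by
        intro h
        rw [orderOf_pow' _ hd0.ne']
        calc orderOf (h : G)
            = orderOf (h : G) / Nat.gcd (orderOf (h : G)) d * Nat.gcd (orderOf (h : G)) d :=
              (Nat.div_mul_cancel (Nat.gcd_dvd_left _ _)).symm
          _ ≤ orderOf (h : G) / Nat.gcd (orderOf (h : G)) d * d :=
              Nat.mul_le_mul_left _ (Nat.le_of_dvd hd0 (Nat.gcd_dvd_right _ _))
          _ = d * (orderOf (h : G) / Nat.gcd (orderOf (h : G)) d) := Nat.mul_comm _ _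
      have step2 : ∀ h : A, orderOf (a * (h : G)) = d * orderOf ((a * (h : G)) ^ d) := by
        intro h
        have hdvd : d ∣ orderOf (a * (h : G)) := by
          have h1 : orderOf ((QuotientGroup.mk' A) (a * (h : G))) ∣ orderOf (a * (h : G)) :=
            orderOf_map_dvd _ _
          have h2 : (QuotientGroup.mk' A) (a * (h : G)) = ((a : G ⧸ A)) := by
            simp [QuotientGroup.mk'_apply, QuotientGroup.mk_mul,
              QuotientGroup.eq_one_iff, h.2]
          rwa [h2] at h1
        rw [orderOf_pow' _ hd0.ne', Nat.gcd_eq_right hdvd, Nat.mul_div_cancel' hdvd]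
      calc ∑ h : A, orderOf (h : G)
          ≤ ∑ h : A, d * orderOf ((h : G) ^ d) := Finset.sum_le_sum fun h _ => step1 h
        _ = d * ∑ h : A, orderOf ((h : G) ^ d) := (Finset.mul_sum _ _ _).symm
        _ = d * ∑ h : A, (fun u : B => orderOf (u : G)) (φ h) := rfl
        _ = d * (Nat.card φ.ker * ∑ u : B, orderOf (u : G)) :=
            congrArg (fun t => d * t) (sum_comp_eq_aux φ hφ (fun u : B => orderOf (u : G)))
        _ ≤ d * (Nat.card φ.ker * ∑ u : B, orderOf (a ^ d * (u : G))) := by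
            exact Nat.mul_le_mul_left _ (Nat.mul_le_mul_left _ claim2)
        _ = d * ∑ h : A, (fun u : B => orderOf (a ^ d * (u : G))) (φ h) :=
            congrArg (fun t => d * t)
              (sum_comp_eq_aux φ hφ (fun u : B => orderOf (a ^ d * (u : G)))).symm
        _ = ∑ h : A, orderOf (a * (h : G)) := by
            rw [Finset.mul_sum]
            refine Finset.sum_congr rfl fun h _ => ?_
            show d * orderOf (a ^ d * (h : G) ^ d) = orderOf (a * (h : G))
            rw [← mul_pow, ← step2 h]

lemma sum_decomp_subgroup (H : Subgroup G) (g : G → ℕ) :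
    ∑ x : G, g x = ∑ q : G ⧸ H, ∑ k : H, g (Quotient.out q * (k : G)) := by
  rw [sum_decomp_aux (QuotientGroup.mk' H) Quotient.out
    (fun q => QuotientGroup.out_eq' q) g]
  refine Finset.sum_congr rfl fun q _ => ?_
  have h2 := Fintype.sum_equiv
    ((Equiv.subtypeEquivRight fun x => by
      rw [MonoidHom.mem_ker, QuotientGroup.mk'_apply, QuotientGroup.eq_one_iff]) :
        {x : G // x ∈ (QuotientGroup.mk' H).ker} ≃ {x : G // x ∈ H})
    (fun k => g (Quotient.out q * (k : G)))
    (fun k => g (Quotient.out q * (k : G))) (fun k => rfl)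
  convert h2 using 2
  congr 1
  exact Subsingleton.elim _ _

end Key

set_option maxHeartbeats 1000000 in
/-- For a finite abelian group `G` and a subgroup `H` of `G`, `o(H) ≤ o(G)`. -/
theorem avgOrder_subgroup_le_of_abelian (G : Type*) [CommGroup G] [Finite G]
    (H : Subgroup G) : avgOrder H ≤ avgOrder G := by
  classical
  have := Fintype.ofFinite G
  set tG : ℕ := ∑ x : G, orderOf x with htG
  set tH : ℕ := ∑ h : H, orderOf (h : G) with htH
  have hmain : Nat.card (G ⧸ H) * tH ≤ tG := by
    rw [htG, sum_decomp_subgroup H orderOf]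
    calc Nat.card (G ⧸ H) * tH = ∑ _q : G ⧸ H, tH := by
          simp [Nat.card_eq_fintype_card, Finset.sum_const, Nat.mul_comm]
      _ ≤ ∑ q : G ⧸ H, ∑ k : H, orderOf (Quotient.out q * (k : G)) :=
          Finset.sum_le_sum fun q _ => key_coset_le (Nat.card H) H rfl (Quotient.out q)
  have hGcard : Nat.card G = Nat.card (G ⧸ H) * Nat.card H :=
    Subgroup.card_eq_card_quotient_mul_card_subgroup H
  have h1 : avgOrder H = (tH : ℝ) / (Nat.card H : ℝ) := by
    have hc : (tH : ℝ) = ∑ x : H, (orderOf x : ℝ) := by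
      rw [htH]
      push_cast
      exact Finset.sum_congr rfl fun x _ => by rw [Subgroup.orderOf_coe]
    rw [avgOrder, finsum_eq_sum_of_fintype, hc]
  have h2 : avgOrder G = (tG : ℝ) / (Nat.card G : ℝ) := by
    rw [avgOrder, finsum_eq_sum_of_fintype, htG]
    push_cast
    rfl
  rw [h1, h2]
  have hHpos : (0 : ℝ) < (Nat.card H : ℝ) := by
    exact_mod_cast Nat.card_pos
  have hGpos : (0 : ℝ) < (Nat.card G : ℝ) := by
    exact_mod_cast Nat.card_pos
  rw [div_le_div_iff₀ hHpos hGpos]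
  have hnat : tH * Nat.card G ≤ tG * Nat.card H := by
    rw [hGcard]
    calc tH * (Nat.card (G ⧸ H) * Nat.card H) = (Nat.card (G ⧸ H) * tH) * Nat.card H := by ring
      _ ≤ tG * Nat.card H := Nat.mul_le_mul_right _ hmain
  exact_mod_cast hnat
end

section
/- Let (x_n)_{n ≥ 1} be a sequence of positive real numbers such that x_n → 0 as n → ∞ and the series ∑_{n=1}^∞ x_n diverges to infinity, and let J be a finite subset of the index set. Then the set of all sums ∑_{n ∈ I} x_n, where I ranges over all finite nonempty subsets of the index set that are disjoint from J, is dense in [0, ∞). -/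
open Filter Topology

/-- If `(x_n)` is a sequence of positive reals with `x_n → 0` and `∑ x_n = ∞`,
and `J` is a finite set of indices, then the set of finite subsums of `(x_n)`
over index sets disjoint from `J` is dense in `[0, ∞)`. -/
theorem finite_subsums_avoiding_dense (x : ℕ → ℝ) (hpos : ∀ n, 0 < x n)
    (hlim : Filter.Tendsto x Filter.atTop (nhds 0))
    (hdiv : Filter.Tendsto (fun N => ∑ n ∈ Finset.range N, x n)
      Filter.atTop Filter.atTop) (J : Finset ℕ) :
    ∀ a : ℝ, 0 ≤ a → ∀ ε : ℝ, 0 < ε →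
      ∃ I : Finset ℕ, I.Nonempty ∧ Disjoint I J ∧
        |(∑ n ∈ I, x n) - a| < ε := by
  classical
  intro a ha ε hε
  -- choose N₀ with x n < ε for n ≥ N₀
  obtain ⟨N₀, hN₀⟩ := (hlim.eventually (gt_mem_nhds hε)).exists_forall_of_atTop
  set N : ℕ := max N₀ (J.sup id + 1) with hN
  have hNJ : ∀ n, N ≤ n → n ∉ J := by
    intro n hn hcontra
    have h1 : n ≤ J.sup id := Finset.le_sup (f := id) hcontra
    have h2 : J.sup id + 1 ≤ n := le_trans (le_max_right _ _) hn
    omega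
  -- tail partial sums diverge
  have hS : Tendsto (fun M => ∑ n ∈ Finset.Ico N M, x n) atTop atTop := by
    have h := hdiv.atTop_add (tendsto_const_nhds (x := -(∑ n ∈ Finset.range N, x n))
      (f := atTop))
    apply h.congr'
    filter_upwards [eventually_ge_atTop N] with M hM
    rw [Finset.sum_Ico_eq_sub _ hM]
    ring
  have hEx : ∃ M, a < ∑ n ∈ Finset.Ico N M, x n := (hS.eventually_gt_atTop a).exists
  set M := Nat.find hEx with hMdef
  have hMspec : a < ∑ n ∈ Finset.Ico N M, x n := Nat.find_spec hEx
  have hNM : N < M := by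
    by_contra h
    push_neg at h
    rw [Finset.Ico_eq_empty (by omega)] at hMspec
    simp at hMspec
    linarith
  have hmin : ¬ a < ∑ n ∈ Finset.Ico N (M - 1), x n := Nat.find_min hEx (by omega)
  push_neg at hmin
  have hsplit : ∑ n ∈ Finset.Ico N M, x n
      = (∑ n ∈ Finset.Ico N (M - 1), x n) + x (M - 1) := by
    have h1 : M = (M - 1) + 1 := by omega
    conv_lhs => rw [h1]
    rw [Finset.sum_Ico_succ_top (by omega)]
  have hxsmall : x (M - 1) < ε := hN₀ _ (by have := le_max_left N₀ (J.sup id + 1); omega)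
  refine ⟨Finset.Ico N M, ?_, ?_, ?_⟩
  · exact Finset.nonempty_Ico.mpr hNM
  · rw [Finset.disjoint_left]
    intro n hn
    exact hNJ n (Finset.mem_Ico.mp hn).1
  · rw [abs_lt]
    constructor <;> [linarith; linarith [hsplit ▸ hMspec, hmin, hxsmall]]
end

section
/- Let G₁ and G₂ be finite groups whose orders are coprime, i.e., gcd(|G₁|, |G₂|) = 1. Then o(G₁ × G₂) = o(G₁) · o(G₂), where G₁ × G₂ denotes the direct product of G₁ and G₂. -/
open Filter Topology

/-- If `G₁`, `G₂` are finite groups of coprime orders, then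
`o(G₁ × G₂) = o(G₁) ⬝ o(G₂)`. -/
theorem avgOrder_prod_of_coprime (G₁ G₂ : Type*) [Group G₁] [Group G₂]
    [Finite G₁] [Finite G₂] (h : Nat.Coprime (Nat.card G₁) (Nat.card G₂)) :
    avgOrder (G₁ × G₂) = avgOrder G₁ * avgOrder G₂ := by
  have : Fintype G₁ := Fintype.ofFinite G₁
  have : Fintype G₂ := Fintype.ofFinite G₂
  have hord : ∀ (x : G₁) (y : G₂), orderOf ((x, y) : G₁ × G₂) = orderOf x * orderOf y := by
    intro x y
    have h1 : orderOf x ∣ Nat.card G₁ := orderOf_dvd_natCard x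
    have h2 : orderOf y ∣ Nat.card G₂ := orderOf_dvd_natCard y
    have hc : Nat.Coprime (orderOf x) (orderOf y) :=
      (h.coprime_dvd_left h1).coprime_dvd_right h2
    rw [Prod.orderOf_mk, Nat.Coprime.lcm_eq_mul hc]
  have hsum : (∑ᶠ z : G₁ × G₂, (orderOf z : ℝ)) =
      (∑ᶠ x : G₁, (orderOf x : ℝ)) * (∑ᶠ y : G₂, (orderOf y : ℝ)) := by
    rw [finsum_eq_sum_of_fintype, finsum_eq_sum_of_fintype, finsum_eq_sum_of_fintype,
      Finset.sum_mul_sum, Fintype.sum_prod_type]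
    apply Finset.sum_congr rfl; intro x _
    apply Finset.sum_congr rfl; intro y _
    rw [hord]; push_cast; ring
  rw [avgOrder, avgOrder, avgOrder, hsum, Nat.card_prod]
  push_cast
  ring
end

section
/- Fix an integer m ≥ 2 and let p_n denote the n-th prime number. Then the sequence of ratios o(C_{p_n}^m)/o(C_{p_n}^{m-1}) converges to 1 as n → ∞; each ratio is strictly greater than 1. -/
/-!
Every nontrivial element of `C_p^k` has order `p`, so `o(C_p^k) = (1 + (N - 1) p) / N` with
`N = p^k`. For `N = p^(m-1)` the ratio `o(C_p^m) / o(C_p^(m-1))` simplifies to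
`(1 + (N p - 1) p) / (p (1 + (N - 1) p))`, which lies in `(1, 1 + 1/p]` because `(p - 1)^2 > 0`
and `N ≥ p - 1`. Since `p_n → ∞`, the ratios are squeezed to `1`.
-/

open Filter Topology

theorem avgOrder_eq_of_forall_pow_eq_one {G : Type*} [Group G] [Finite G] {p : ℕ}
    (hp : p.Prime) (h : ∀ x : G, x ^ p = 1) :
    avgOrder G = (1 + (Nat.card G - 1) * p) / Nat.card G := by
  classical
  have := Fintype.ofFinite G
  have horder (x : G) (hx : x ≠ 1) : (orderOf x : ℝ) = p := by
    rw [orderOf_eq_prime (hp := ⟨hp⟩) (h x) hx]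
  have hsum : ∑ x : G, (orderOf x : ℝ) = 1 + (Nat.card G - 1) * p := by
    rw [← Finset.add_sum_erase _ _ (Finset.mem_univ 1), orderOf_one, Nat.cast_one,
      Finset.sum_congr rfl fun x hx => horder x (Finset.ne_of_mem_erase hx), Finset.sum_const,
      Finset.card_erase_of_mem (Finset.mem_univ _), Finset.card_univ, nsmul_eq_mul,
      Nat.cast_pred Fintype.card_pos, Nat.card_eq_fintype_card]
  rw [avgOrder, finsum_eq_sum_of_fintype, hsum]

theorem avgOrder_pi_zmod {p : ℕ} (hp : p.Prime) (k : ℕ) :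
    avgOrder (Fin k → Multiplicative (ZMod p)) = (1 + ((p : ℝ) ^ k - 1) * p) / (p : ℝ) ^ k := by
  have : Fact p.Prime := ⟨hp⟩
  have hcard : Nat.card (Fin k → Multiplicative (ZMod p)) = p ^ k := by simp
  rw [avgOrder_eq_of_forall_pow_eq_one hp, hcard, Nat.cast_pow]
  intro x
  funext i
  simpa using pow_card_eq_one' (x := x i)

theorem avgOrder_mul_div_mem_Ioc_of_primeExponent {p N : ℝ} (hp : 1 < p) (hN : p - 1 ≤ N) :
    (1 + (N * p - 1) * p) / (N * p) / ((1 + (N - 1) * p) / N) ∈ Set.Ioc 1 (1 + p⁻¹) := by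
  have hN0 : 0 < N := by linarith
  have hden : 0 < p * (1 + (N - 1) * p) := mul_pos (by linarith) (by nlinarith)
  have hratio : (1 + (N * p - 1) * p) / (N * p) / ((1 + (N - 1) * p) / N)
      = (1 + (N * p - 1) * p) / (p * (1 + (N - 1) * p)) := by
    field_simp
  rw [hratio, Set.mem_Ioc, one_lt_div hden, div_le_iff₀ hden]
  constructor
  · nlinarith
  · rw [add_mul, inv_mul_cancel_left₀ (by positivity)]
    nlinarith

theorem avgOrder_pi_zmod_succ_div_mem_Ioc {p : ℕ} (hp : p.Prime) (k : ℕ) :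
    avgOrder (Fin (k + 2) → Multiplicative (ZMod p)) /
        avgOrder (Fin (k + 1) → Multiplicative (ZMod p)) ∈ Set.Ioc 1 (1 + (p : ℝ)⁻¹) := by
  have hp1 : (1 : ℝ) < p := by exact_mod_cast hp.one_lt
  have hpk : (p : ℝ) - 1 ≤ (p : ℝ) ^ (k + 1) := by
    have : (p : ℝ) ≤ (p : ℝ) ^ (k + 1) := le_self_pow₀ hp1.le (Nat.succ_ne_zero k)
    linarith
  rw [avgOrder_pi_zmod hp, avgOrder_pi_zmod hp, pow_succ _ (k + 1)]
  exact avgOrder_mul_div_mem_Ioc_of_primeExponent hp1 hpk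

theorem tendsto_nth_prime_atTop : Tendsto (fun n => (Nat.nth Nat.Prime n : ℝ)) atTop atTop :=
  tendsto_natCast_atTop_atTop.comp
    (Nat.nth_strictMono Nat.infinite_setOfPred_prime).tendsto_atTop

/-- For fixed `m ≥ 2`, the ratios `o(C_{p_n}^m)/o(C_{p_n}^{m-1})` tend to `1`
as `n → ∞`, and each ratio is strictly greater than `1`. -/
theorem avgOrder_ratio_elemAbelian_tendsto_one (m : ℕ) (hm : 2 ≤ m) :
    Filter.Tendsto
      (fun n => avgOrder (Fin m → Multiplicative (ZMod (Nat.nth Nat.Prime n))) /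
        avgOrder (Fin (m - 1) → Multiplicative (ZMod (Nat.nth Nat.Prime n))))
      Filter.atTop (nhds 1) ∧
    ∀ n, 1 < avgOrder (Fin m → Multiplicative (ZMod (Nat.nth Nat.Prime n))) /
      avgOrder (Fin (m - 1) → Multiplicative (ZMod (Nat.nth Nat.Prime n))) := by
  obtain ⟨k, rfl⟩ : ∃ k, m = k + 2 := ⟨m - 2, by omega⟩
  have hbounds (n : ℕ) := avgOrder_pi_zmod_succ_div_mem_Ioc (Nat.prime_nth_prime n) k
  have hupper : Tendsto (fun n => 1 + (Nat.nth Nat.Prime n : ℝ)⁻¹) atTop (𝓝 1) := by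
    simpa using tendsto_const_nhds.add (tendsto_inv_atTop_zero.comp tendsto_nth_prime_atTop)
  exact ⟨tendsto_of_tendsto_of_tendsto_of_le_of_le tendsto_const_nhds hupper
    (fun n => (hbounds n).1.le) (fun n => (hbounds n).2), fun n => (hbounds n).1⟩
end
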